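/- arXiv:2011.07863 — 6 statements merged into one kernel-verified Lean document; each statement's English description precedes it below -/
import Mathlib

section
/- Let F be a finite field with q elements and let Δ ≥ 1 be an integer with q ≥ 3Δ. Then there exists an injective family of q³ subsets S₁, …, S_{q³} of the ground set F × F (which has q² elements), each subset of size exactly q, such that for every index i and every collection of at most Δ of the other subsets, the number of elements of Sᵢ that belong to none of the chosen other subsets is at least Δ. -/
/-!
Take as members the graphs `{(x, g x) : x ∈ F}` of the `q³` polynomials `g` of degree at most 2.
Two distinct graphs meet only at roots of the nonzero difference of their polynomials, so in at
most 2 points. Hence the union of `Δ` other graphs covers at most `2Δ` of the `q` points of a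
graph, and at least `q - 2Δ ≥ Δ` remain; `q > 2` also makes distinct graphs distinct sets.
-/

open Finset Polynomial

namespace Finset

variable {ι α : Type*} [DecidableEq α]

theorem injective_of_card_inter_lt {S : ι → Finset α} {d k : ℕ} (hcard : ∀ i, #(S i) = k)
    (hinter : Pairwise fun i j => #(S i ∩ S j) ≤ d) (hdk : d < k) : Function.Injective S := by
  intro i j hij
  by_contra hne
  have : #(S i ∩ S j) ≤ d := hinter hne
  rw [hij, inter_self, hcard] at this
  omega

theorem card_le_card_sdiff_biUnion_add {S : ι → Finset α} {d : ℕ}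
    (hinter : Pairwise fun i j => #(S i ∩ S j) ≤ d) {i : ι} {T : Finset ι} (hi : i ∉ T) :
    #(S i) ≤ #(S i \ T.biUnion S) + d * #T := by
  have hcover : #(S i ∩ T.biUnion S) ≤ d * #T := by
    rw [inter_biUnion, mul_comm]
    exact card_biUnion_le.trans <| sum_le_card_nsmul _ _ _ fun j hj =>
      hinter fun hij => hi (hij ▸ hj)
  rw [← card_sdiff_add_card_inter (S i) (T.biUnion S)]
  exact Nat.add_le_add_left hcover _

end Finset

namespace Polynomial

variable {F : Type*} [Field F] [Fintype F]

theorem nat_card_degreeLT (n : ℕ) : Nat.card (degreeLT F n) = Fintype.card F ^ n := by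
  rw [Nat.card_congr (degreeLTEquiv F n).toEquiv, Nat.card_fun, Nat.card_eq_fintype_card,
    Nat.card_fin]

variable [DecidableEq F]

def graphFinset (p : F[X]) : Finset (F × F) :=
  univ.image fun x => (x, p.eval x)

theorem mem_graphFinset {p : F[X]} {z : F × F} : z ∈ p.graphFinset ↔ z.2 = p.eval z.1 := by
  obtain ⟨x, y⟩ := z
  simp [graphFinset, eq_comm]

theorem card_graphFinset (p : F[X]) : #p.graphFinset = Fintype.card F :=
  card_image_of_injective _ fun _ _ h => (Prod.mk.inj h).1

theorem card_graphFinset_inter_le {p r : F[X]} (hpr : p ≠ r) :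
    #(p.graphFinset ∩ r.graphFinset) ≤ (p - r).natDegree := by
  have hfst : Set.InjOn Prod.fst (↑(p.graphFinset ∩ r.graphFinset) : Set (F × F)) := by
    rintro ⟨x, y⟩ hz ⟨x', y'⟩ hz' (rfl : x = x')
    simp only [coe_inter, Set.mem_inter_iff, mem_coe, mem_graphFinset] at hz hz'
    rw [hz.1, hz'.1]
  rw [← card_image_of_injOn hfst]
  refine card_le_degree_of_subset_roots fun x hx => ?_
  obtain ⟨z, hz, rfl⟩ := mem_image.1 hx
  rw [mem_inter, mem_graphFinset, mem_graphFinset] at hz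
  rw [mem_roots (sub_ne_zero.2 hpr), IsRoot, eval_sub, ← hz.1, ← hz.2, sub_self]

theorem card_graphFinset_inter_le_of_mem_degreeLT {n : ℕ} {p r : F[X]}
    (hp : p ∈ degreeLT F (n + 1)) (hr : r ∈ degreeLT F (n + 1)) (hpr : p ≠ r) :
    #(p.graphFinset ∩ r.graphFinset) ≤ n := by
  refine (card_graphFinset_inter_le hpr).trans ?_
  have hdeg : (p - r).degree < ↑(n + 1) := mem_degreeLT.1 (Submodule.sub_mem _ hp hr)
  exact Nat.lt_succ_iff.1 ((natDegree_lt_iff_degree_lt (sub_ne_zero.2 hpr)).2 hdeg)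

end Polynomial

/-- For a finite field `F` with `q` elements and `Δ ≥ 1` with `q ≥ 3Δ`,
there is an injective family of `q³` subsets of the ground set `F × F` (of size `q²`),
each of size exactly `q`, such that removing from any member the union of any at most
`Δ` other members leaves at least `Δ` elements. -/
theorem stmt_8 {F : Type*} [Field F] [Fintype F] [DecidableEq F] (Δ : ℕ)
    (hΔ : 1 ≤ Δ) (hq : 3 * Δ ≤ Fintype.card F) :
    ∃ S : Fin (Fintype.card F ^ 3) → Finset (F × F),
      Function.Injective S ∧
      (∀ i, (S i).card = Fintype.card F) ∧
      (∀ (i : Fin (Fintype.card F ^ 3)) (T : Finset (Fin (Fintype.card F ^ 3))),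
        i ∉ T → T.card ≤ Δ → Δ ≤ ((S i) \ T.biUnion S).card) := by
  have : Finite (degreeLT F 3) := .of_equiv _ (degreeLTEquiv F 3).toEquiv.symm
  let e : Fin (Fintype.card F ^ 3) ≃ degreeLT F 3 :=
    (Finite.equivFinOfCardEq (nat_card_degreeLT 3)).symm
  let S i := (e i : F[X]).graphFinset
  have hcard i : #(S i) = Fintype.card F := card_graphFinset _
  have hinter : Pairwise fun i j => #(S i ∩ S j) ≤ 2 := fun i j hij =>
    card_graphFinset_inter_le_of_mem_degreeLT (e i).2 (e j).2
      (Subtype.coe_injective.ne (e.injective.ne hij))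
  refine ⟨S, injective_of_card_inter_lt hcard hinter (by omega), hcard, fun i T hi hT => ?_⟩
  have := card_le_card_sdiff_biUnion_add hinter hi
  rw [hcard] at this
  omega
end

section
/- Let F be a finite field with q elements, let d ≥ 1, ρ ≥ 0 and t ≥ 1 be integers, and let g₀, g₁, …, g_t be polynomials over F, each of degree at most d, with gᵢ ≠ g₀ for every 1 ≤ i ≤ t. If for every element a ∈ F the number of indices 1 ≤ i ≤ t with gᵢ(a) = g₀(a) is at least ρ+1 (i.e., the graphs of g₁,…,g_t (ρ+1)-cover the graph of g₀), then t · d ≥ q · (ρ+1). -/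
open Finset Polynomial

theorem Polynomial.card_filter_eval_eq_le {R : Type*} [CommRing R] [IsDomain R] [DecidableEq R]
    {p q : R[X]} {d : ℕ} (hpq : p ≠ q) (hp : p.natDegree ≤ d) (hq : q.natDegree ≤ d)
    (s : Finset R) : #(s.filter fun a => p.eval a = q.eval a) ≤ d := by
  have hroots : (s.filter fun a => p.eval a = q.eval a).val ⊆ (p - q).roots := by
    intro a ha
    rw [mem_roots (sub_ne_zero.mpr hpq), IsRoot, eval_sub, sub_eq_zero]
    exact (mem_filter.mp ha).2
  calc #(s.filter fun a => p.eval a = q.eval a) ≤ (p - q).natDegree :=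
        card_le_degree_of_subset_roots hroots
    _ ≤ max p.natDegree q.natDegree := natDegree_sub_le p q
    _ ≤ d := max_le hp hq

theorem stmt_10_general {F : Type*} [Field F] [Fintype F] [DecidableEq F]
    (d ρ t : ℕ)
    (g₀ : Polynomial F) (g : Fin t → Polynomial F)
    (hdeg₀ : g₀.natDegree ≤ d) (hdeg : ∀ i, (g i).natDegree ≤ d)
    (hne : ∀ i, g i ≠ g₀)
    (hcover : ∀ a : F,
      ρ + 1 ≤ (Finset.univ.filter fun i => (g i).eval a = g₀.eval a).card) :
    Fintype.card F * (ρ + 1) ≤ t * d := by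
  simpa using card_mul_le_card_mul (fun (a : F) (i : Fin t) => (g i).eval a = g₀.eval a)
    (fun a _ => hcover a)
    (fun i _ => card_filter_eval_eq_le (hne i) (hdeg i) hdeg₀ univ)

/-- If the graphs of polynomials `g 1, …, g t` (each of degree at most `d`,
each different from `g₀`) over a finite field `F` with `q` elements `(ρ+1)`-cover the
graph of `g₀` (every `a ∈ F` has at least `ρ+1` indices `i` with `gᵢ(a) = g₀(a)`),
then `t · d ≥ q · (ρ+1)`. -/
theorem stmt_10 {F : Type*} [Field F] [Fintype F] [DecidableEq F]
    (d ρ t : ℕ) (hd : 1 ≤ d) (ht : 1 ≤ t)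
    (g₀ : Polynomial F) (g : Fin t → Polynomial F)
    (hdeg₀ : g₀.natDegree ≤ d) (hdeg : ∀ i, (g i).natDegree ≤ d)
    (hne : ∀ i, g i ≠ g₀)
    (hcover : ∀ a : F,
      ρ + 1 ≤ (Finset.univ.filter fun i => (g i).eval a = g₀.eval a).card) :
    Fintype.card F * (ρ + 1) ≤ t * d :=
  stmt_10_general d ρ t g₀ g hdeg₀ hdeg hne hcover
end

section
/- Let F be a finite field with q elements, let Δ ≥ 1 and p ≥ 0 be integers with q·(p+1) ≥ 3Δ, and let g₀, g₁, …, g_Δ be polynomials over F, each of degree at most 2, with gᵢ ≠ g₀ for every 1 ≤ i ≤ Δ. Then the number of elements a ∈ F such that at most p of the indices 1 ≤ i ≤ Δ satisfy gᵢ(a) = g₀(a) is at least Δ/(p+1) (as a real-number inequality). -/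
/-!
Each `gᵢ - g₀` is a nonzero polynomial of degree at most `2`, so `gᵢ` agrees with `g₀` at no
more than two points and there are at most `2Δ` agreements `gᵢ(a) = g₀(a)` in total. By
double counting (Markov's inequality) fewer than `2Δ/(p+1)` points carry more than `p`
agreements, so at least `q - 2Δ/(p+1) ≥ Δ/(p+1)` points carry at most `p` of them.
-/

open Finset Polynomial

theorem Polynomial.card_filter_eval_eq_le_s11 {R : Type*} [CommRing R] [IsDomain R] [DecidableEq R]
    {f g : R[X]} (hfg : f ≠ g) (s : Finset R) :
    #{a ∈ s | f.eval a = g.eval a} ≤ (f - g).natDegree := by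
  refine card_le_degree_of_subset_roots fun a ha => ?_
  rw [Finset.filter_val, Multiset.mem_filter] at ha
  rw [mem_roots (sub_ne_zero.mpr hfg), IsRoot, eval_sub, sub_eq_zero]
  exact ha.2

theorem Finset.card_mul_le_card_filter_card_bipartiteAbove_le_mul_add {α β : Type*}
    (r : α → β → Prop) [∀ a b, Decidable (r a b)] (s : Finset α) (t : Finset β) (p k : ℕ)
    (hk : ∀ b ∈ t, #(s.bipartiteBelow r b) ≤ k) :
    #s * (p + 1) ≤ #{a ∈ s | #(t.bipartiteAbove r a) ≤ p} * (p + 1) + #t * k := by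
  set bad := {a ∈ s | ¬ #(t.bipartiteAbove r a) ≤ p}
  have hbad : #bad • (p + 1) ≤ #t • k := by
    refine card_nsmul_le_card_nsmul r (fun a ha => ?_) (fun b hb => ?_)
    · exact Nat.lt_of_not_le (mem_filter.mp ha).2
    · exact (card_le_card (filter_subset_filter _ (filter_subset _ s))).trans (hk b hb)
  rw [smul_eq_mul, smul_eq_mul] at hbad
  rw [← card_filter_add_card_filter_not (s := s) (fun a => #(t.bipartiteAbove r a) ≤ p),
    add_mul]
  exact Nat.add_le_add_left hbad _

theorem stmt_11_general {F : Type*} [Field F] [Fintype F] [DecidableEq F] (Δ p : ℕ)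
    (hq : 3 * Δ ≤ Fintype.card F * (p + 1))
    (g₀ : Polynomial F) (g : Fin Δ → Polynomial F)
    (hdeg₀ : g₀.natDegree ≤ 2) (hdeg : ∀ i, (g i).natDegree ≤ 2)
    (hne : ∀ i, g i ≠ g₀) :
    (Δ : ℝ) / ((p : ℝ) + 1) ≤
      ((Finset.univ.filter fun a : F =>
          (Finset.univ.filter fun i => (g i).eval a = g₀.eval a).card ≤ p).card : ℝ) := by
  have hagree : ∀ i ∈ (univ : Finset (Fin Δ)),
      #((univ : Finset F).bipartiteBelow (fun a i => (g i).eval a = g₀.eval a) i) ≤ 2 :=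
    fun i _ => (card_filter_eval_eq_le_s11 (hne i) univ).trans
      ((natDegree_sub_le _ _).trans (max_le (hdeg i) hdeg₀))
  have hcount := card_mul_le_card_filter_card_bipartiteAbove_le_mul_add _ univ univ p 2 hagree
  simp only [card_univ, Fintype.card_fin, bipartiteAbove] at hcount
  rw [div_le_iff₀ (by positivity)]
  exact_mod_cast (by omega : Δ ≤ _ * (p + 1))

/-- For `q·(p+1) ≥ 3Δ` and polynomials `g₀, g 1, …, g Δ` of degree at most
`2` over a finite field `F` with `q` elements, with `g i ≠ g₀` for all `i`, the number
of elements `a ∈ F` such that at most `p` indices `i` satisfy `gᵢ(a) = g₀(a)` is at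
least `Δ/(p+1)` (as a real-number inequality). -/
theorem stmt_11 {F : Type*} [Field F] [Fintype F] [DecidableEq F] (Δ p : ℕ)
    (hΔ : 1 ≤ Δ) (hq : 3 * Δ ≤ Fintype.card F * (p + 1))
    (g₀ : Polynomial F) (g : Fin Δ → Polynomial F)
    (hdeg₀ : g₀.natDegree ≤ 2) (hdeg : ∀ i, (g i).natDegree ≤ 2)
    (hne : ∀ i, g i ≠ g₀) :
    (Δ : ℝ) / ((p : ℝ) + 1) ≤
      ((Finset.univ.filter fun a : F =>
          (Finset.univ.filter fun i => (g i).eval a = g₀.eval a).card ≤ p).card : ℝ) :=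
  stmt_11_general Δ p hq g₀ g hdeg₀ hdeg hne
end

section
/- Let G be a simple graph on a vertex set V, let φ : V → {1,…,α} be a D-defective coloring of G (every vertex v has at most D neighbors u with φ(u) = φ(v)), let F₁, …, F_α be subsets of {1,…,m}, and let φ' : V → {1,…,m} be a function such that for every vertex v: (1) φ'(v) ∈ F_{φ(v)}, and (2) the number of neighbors u of v with φ(u) ≠ φ(v) and φ'(v) ∈ F_{φ(u)} is at most ρ. Then φ' is a (ρ+D)-defective m-coloring of G: every vertex v has at most ρ+D neighbors u with φ'(u) = φ'(v). -/
/-! A neighbour `u` of `v` with `φ' u = φ' v` either has the old colour of `v`, which happens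
for at most `D` neighbours, or has a different old colour and then `φ' v = φ' u ∈ F (φ u)`,
which happens for at most `ρ` neighbours. -/

open Finset

theorem Finset.card_filter_le_card_filter_not_and_add {ι : Type*} (s : Finset ι)
    {p q r : ι → Prop} [DecidablePred p] [DecidablePred q] [DecidablePred r]
    (h : ∀ x ∈ s, p x → r x) :
    #(s.filter p) ≤ #(s.filter fun x => ¬q x ∧ r x) + #(s.filter q) := by
  rw [← card_filter_add_card_filter_not (s := s.filter p) q, add_comm]
  refine add_le_add (card_le_card fun x hx => ?_)
    (card_le_card (filter_subset_filter q (filter_subset p s)))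
  simp only [mem_filter] at hx ⊢
  exact ⟨hx.1.1, hx.2, h x hx.1.1 hx.1.2⟩

theorem stmt_12_general {V : Type*} [Fintype V] (G : SimpleGraph V)
    [DecidableRel G.Adj] (α m D ρ : ℕ)
    (φ : V → Fin α) (φ' : V → Fin m) (F : Fin α → Finset (Fin m))
    (hD : ∀ v, ((G.neighborFinset v).filter fun u => φ u = φ v).card ≤ D)
    (h1 : ∀ v, φ' v ∈ F (φ v))
    (h2 : ∀ v, ((G.neighborFinset v).filter
        fun u => φ u ≠ φ v ∧ φ' v ∈ F (φ u)).card ≤ ρ) :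
    ∀ v, ((G.neighborFinset v).filter fun u => φ' u = φ' v).card ≤ ρ + D := by
  intro v
  calc #((G.neighborFinset v).filter fun u => φ' u = φ' v)
      ≤ #((G.neighborFinset v).filter fun u => φ u ≠ φ v ∧ φ' v ∈ F (φ u)) +
          #((G.neighborFinset v).filter fun u => φ u = φ v) :=
        card_filter_le_card_filter_not_and_add _ fun u _ hu => hu ▸ h1 u
    _ ≤ ρ + D := add_le_add (h2 v) (hD v)

/-- Given a `D`-defective `α`-coloring `φ` of `G`, sets `F 1, …, F α`
of colors in `{1,…,m}`, and a new coloring `φ'` such that each `φ' v ∈ F (φ v)` and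
at most `ρ` differently-`φ`-colored neighbors `u` of `v` have `φ' v ∈ F (φ u)`, the
coloring `φ'` is a `(ρ+D)`-defective `m`-coloring of `G`. -/
theorem stmt_12 {V : Type*} [Fintype V] [DecidableEq V] (G : SimpleGraph V)
    [DecidableRel G.Adj] (α m D ρ : ℕ)
    (φ : V → Fin α) (φ' : V → Fin m) (F : Fin α → Finset (Fin m))
    (hD : ∀ v, ((G.neighborFinset v).filter fun u => φ u = φ v).card ≤ D)
    (h1 : ∀ v, φ' v ∈ F (φ v))
    (h2 : ∀ v, ((G.neighborFinset v).filter
        fun u => φ u ≠ φ v ∧ φ' v ∈ F (φ u)).card ≤ ρ) :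
    ∀ v, ((G.neighborFinset v).filter fun u => φ' u = φ' v).card ≤ ρ + D :=
  stmt_12_general G α m D ρ φ φ' F hD h1 h2
end

section
/- Let V be a finite linearly ordered set, let G be a simple graph on V, and let π : V → V be a function such that for every edge {u,v} of G with u < v, one has π(u) = v (each vertex's edges to strictly larger neighbors all go to its single parent π(u)). Then G is acyclic, i.e., G is a forest. -/
/-!
Rotate a cycle so that it starts at its least vertex `m`. The second and the penultimate vertex of
the rotated cycle are distinct neighbours of `m`, and both are larger than `m`; but `m` has at most
one larger neighbour, namely `π m`.
-/

open SimpleGraph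

theorem SimpleGraph.isAcyclic_of_lt_adj_unique {V : Type*} [LinearOrder V] {G : SimpleGraph V}
    (h : ∀ u a b, G.Adj u a → G.Adj u b → u < a → u < b → a = b) :
    G.IsAcyclic := by
  intro v c hc
  classical
  obtain ⟨m, hm, hmin⟩ := c.support.toFinset.exists_min_image id ⟨v, by simp⟩
  rw [List.mem_toFinset] at hm
  set c' := c.rotate m hm
  have hc' : c'.IsCycle := hc.rotate hm
  have hlt : ∀ x ∈ c'.support, x ≠ m → m < x := fun x hx hxm =>
    lt_of_le_of_ne (hmin x (by simpa [c'] using hx)) hxm.symm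
  have hsnd : G.Adj m c'.snd := c'.adj_snd hc'.not_nil
  have hpen : G.Adj c'.penultimate m := c'.adj_penultimate hc'.not_nil
  exact hc'.snd_ne_penultimate <| h m _ _ hsnd hpen.symm
    (hlt _ (c'.getVert_mem_support _) hsnd.ne') (hlt _ (c'.getVert_mem_support _) hpen.ne)

theorem stmt_13_general {V : Type*} [LinearOrder V] (G : SimpleGraph V)
    (π : V → V) (hπ : ∀ u v, G.Adj u v → u < v → π u = v) :
    G.IsAcyclic :=
  isAcyclic_of_lt_adj_unique fun u a b ha hb hua hub => (hπ u a ha hua).symm.trans (hπ u b hb hub)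

/-- If `V` is a finite linearly ordered set, `G` a simple graph on `V`,
and `π : V → V` a function such that every edge `{u,v}` with `u < v` satisfies
`π u = v` (all edges to strictly larger neighbors go to the single parent), then
`G` is acyclic, i.e. a forest. -/
theorem stmt_13 {V : Type*} [Fintype V] [LinearOrder V] (G : SimpleGraph V)
    (π : V → V) (hπ : ∀ u v, G.Adj u v → u < v → π u = v) :
    G.IsAcyclic :=
  stmt_13_general G π hπ
end

section
/- Let G be a finite simple graph with maximum degree at most Δ, where Δ ≥ 1. Then the edge set of G can be partitioned into Δ classes E₁, …, E_Δ such that for every 1 ≤ i ≤ Δ, the spanning subgraph of G with edge set Eᵢ is a forest (contains no cycles). -/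
/-!
Number the vertices injectively and orient every edge towards its larger endpoint. Each vertex
labels its at most `Δ` neighbours injectively by `0, …, Δ - 1`, and an edge is put in the class
of the label its lower endpoint gives its upper endpoint. Within a class every vertex then has
at most one neighbour above it, whereas the lowest vertex of a cycle has two.
-/

open Function Finset

theorem Finset.exists_injOn_lt_card {α : Type*} (s : Finset α) :
    ∃ c : α → ℕ, Set.InjOn c s ∧ ∀ a ∈ s, c a < #s := by
  classical
  refine ⟨fun a => if h : a ∈ s then s.equivFin ⟨a, h⟩ else 0, fun a ha b hb hab => ?_,
    fun a ha => by simp [ha]⟩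
  simp only [mem_coe] at ha hb
  simpa [ha, hb, Fin.val_inj] using hab

namespace SimpleGraph

variable {V α : Type*} [LinearOrder α]

theorem isAcyclic_of_subsingleton_upper {H : SimpleGraph V} {f : V → α} (hf : Injective f)
    (h : ∀ v, {w | H.Adj v w ∧ f v < f w}.Subsingleton) : H.IsAcyclic := by
  classical
  intro u c hc
  obtain ⟨v, hv, hmin⟩ := c.support.toFinset.exists_min_image f ⟨u, by simp⟩
  rw [List.mem_toFinset] at hv
  set d := c.rotate v hv
  have hd : d.IsCycle := hc.rotate hv
  have upper {w} (hw : w ∈ d.support) (hadj : H.Adj v w) : H.Adj v w ∧ f v < f w :=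
    ⟨hadj, (hmin w (by simpa [d] using hw)).lt_of_ne (hf.ne hadj.ne)⟩
  exact hd.snd_ne_penultimate <| h v
    (upper (d.getVert_mem_support 1) (d.adj_snd hd.not_nil))
    (upper (d.getVert_mem_support _) (d.adj_penultimate hd.not_nil).symm)

theorem exists_neighbor_labelling (G : SimpleGraph V) [Fintype V] [DecidableRel G.Adj] {Δ : ℕ}
    (hdeg : G.maxDegree ≤ Δ) :
    ∃ c : V → V → ℕ, ∀ v, Set.InjOn (c v) (G.neighborSet v) ∧ ∀ w, G.Adj v w → c v w < Δ := by
  choose c hinj hlt using fun v => (G.neighborFinset v).exists_injOn_lt_card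
  refine ⟨c, fun v => ⟨by simpa using hinj v, fun w hw => ?_⟩⟩
  calc c v w < G.degree v := by simpa using hlt v w (by simpa using hw)
    _ ≤ Δ := (G.degree_le_maxDegree v).trans hdeg

def lowerLabelClass (G : SimpleGraph V) (f : V → α) (c : V → V → ℕ) (i : ℕ) : Set (Sym2 V) :=
  {e | ∃ v w, G.Adj v w ∧ f v < f w ∧ c v w = i ∧ s(v, w) = e}

variable {G : SimpleGraph V} {f : V → α} {c : V → V → ℕ}

theorem lowerLabelClass_subset_edgeSet (i : ℕ) : G.lowerLabelClass f c i ⊆ G.edgeSet := by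
  rintro _ ⟨v, w, hadj, -, -, rfl⟩
  exact hadj

theorem mk_mem_lowerLabelClass {v w : V} (hvw : f v < f w) {i : ℕ} :
    s(v, w) ∈ G.lowerLabelClass f c i ↔ G.Adj v w ∧ c v w = i := by
  refine ⟨?_, fun ⟨hadj, hi⟩ => ⟨v, w, hadj, hvw, hi, rfl⟩⟩
  rintro ⟨v', w', hadj, hlt, rfl, heq⟩
  rcases Sym2.eq_iff.1 heq with ⟨rfl, rfl⟩ | ⟨rfl, rfl⟩
  · exact ⟨hadj, rfl⟩
  · exact absurd hvw hlt.not_gt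

theorem exists_mk_eq_of_mem_edgeSet (hf : Injective f) {e : Sym2 V} (he : e ∈ G.edgeSet) :
    ∃ v w, f v < f w ∧ s(v, w) = e := by
  induction e using Sym2.ind with
  | _ a b =>
    rcases (hf.ne (G.ne_of_adj he)).lt_or_gt with h | h
    exacts [⟨a, b, h, rfl⟩, ⟨b, a, h, Sym2.eq_swap⟩]

theorem iUnion_lowerLabelClass (hf : Injective f) {Δ : ℕ} (hc : ∀ v w, G.Adj v w → c v w < Δ) :
    ⋃ i : Fin Δ, G.lowerLabelClass f c i = G.edgeSet := by
  refine (Set.iUnion_subset fun i : Fin Δ => lowerLabelClass_subset_edgeSet i).antisymm fun e he => ?_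
  obtain ⟨v, w, hvw, rfl⟩ := exists_mk_eq_of_mem_edgeSet hf he
  exact Set.mem_iUnion.2 ⟨⟨c v w, hc v w he⟩, (mk_mem_lowerLabelClass hvw).2 ⟨he, rfl⟩⟩

theorem disjoint_lowerLabelClass {i j : ℕ} (hij : i ≠ j) :
    Disjoint (G.lowerLabelClass f c i) (G.lowerLabelClass f c j) := by
  rw [Set.disjoint_left]
  rintro _ ⟨v, w, -, hvw, rfl, rfl⟩ hj
  exact hij ((mk_mem_lowerLabelClass hvw).1 hj).2

theorem isAcyclic_fromEdgeSet_lowerLabelClass (hf : Injective f)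
    (hc : ∀ v, Set.InjOn (c v) (G.neighborSet v)) (i : ℕ) :
    (fromEdgeSet (G.lowerLabelClass f c i)).IsAcyclic := by
  refine isAcyclic_of_subsingleton_upper hf fun v w ⟨hw, hvw⟩ w' ⟨hw', hvw'⟩ => ?_
  obtain ⟨hadj, hi⟩ := (mk_mem_lowerLabelClass hvw).1 (fromEdgeSet_adj _ |>.1 hw).1
  obtain ⟨hadj', hi'⟩ := (mk_mem_lowerLabelClass hvw').1 (fromEdgeSet_adj _ |>.1 hw').1
  exact hc v hadj hadj' (hi.trans hi'.symm)

end SimpleGraph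

theorem stmt_14_general {V : Type*} [Fintype V] (G : SimpleGraph V)
    [DecidableRel G.Adj] (Δ : ℕ) (hdeg : G.maxDegree ≤ Δ) :
    ∃ E : Fin Δ → Set (Sym2 V),
      (∀ i, E i ⊆ G.edgeSet) ∧
      (⋃ i, E i) = G.edgeSet ∧
      (∀ i j, i ≠ j → Disjoint (E i) (E j)) ∧
      (∀ i, (SimpleGraph.fromEdgeSet (E i)).IsAcyclic) := by
  obtain ⟨c, hc⟩ := G.exists_neighbor_labelling hdeg
  let f := Fintype.equivFin V
  have hf : Injective f := f.injective
  exact ⟨fun i => G.lowerLabelClass f c i,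
    fun i => SimpleGraph.lowerLabelClass_subset_edgeSet i,
    SimpleGraph.iUnion_lowerLabelClass hf fun v => (hc v).2,
    fun i j hij => SimpleGraph.disjoint_lowerLabelClass (Fin.val_injective.ne hij),
    fun i => SimpleGraph.isAcyclic_fromEdgeSet_lowerLabelClass hf (fun v => (hc v).1) i⟩

/-- Panconesi–Rizzi `Δ`-forest decomposition: The edge set of any finite
simple graph of maximum degree at most `Δ` (with `Δ ≥ 1`) can be partitioned into `Δ`
classes each of which spans a forest. -/
theorem stmt_14 {V : Type*} [Fintype V] [DecidableEq V] (G : SimpleGraph V)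
    [DecidableRel G.Adj] (Δ : ℕ) (hΔ : 1 ≤ Δ) (hdeg : G.maxDegree ≤ Δ) :
    ∃ E : Fin Δ → Set (Sym2 V),
      (∀ i, E i ⊆ G.edgeSet) ∧
      (⋃ i, E i) = G.edgeSet ∧
      (∀ i j, i ≠ j → Disjoint (E i) (E j)) ∧
      (∀ i, (SimpleGraph.fromEdgeSet (E i)).IsAcyclic) :=
  stmt_14_general G Δ hdeg
end
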